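/- arXiv:1512.01077 — 2 statements merged into one kernel-verified Lean document; each statement's English description precedes it below -/
import Mathlib

section
/- Let G be a graph whose vertex set is partitioned into cliques C_1, ..., C_{k+n} where k = γ(G) is the domination number. Let l < k+n, choose cliques C_{i_1},...,C_{i_l}, and let D be a smallest set of vertices of V(G) \ (C_{i_1} ∪ ... ∪ C_{i_l}) that dominates C_{i_1} ∪ ... ∪ C_{i_l}. If C_{j_1},...,C_{j_t} are the cliques of the partition having nonempty intersection with D, then Σ_{m=1}^{t} (|C_{j_m} ∩ D| - 1) ≥ l - n. -/
open Finset

/-- `S` dominates `T`: every vertex of `T` is in the closed neighborhood of `S`. -/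
def Dominates {V : Type*} (G : SimpleGraph V) (S T : Set V) : Prop :=
  ∀ t ∈ T, ∃ s ∈ S, s = t ∨ G.Adj s t

/-- The domination number of a finite graph. -/
noncomputable def domNum {V : Type*} [Fintype V] (G : SimpleGraph V) : ℕ :=
  sInf {n | ∃ D : Finset V, D.card = n ∧ Dominates G ↑D Set.univ}

/-- A partition of the vertex set of `G` into `m` cliques. -/
structure CliquePartition {V : Type*} (G : SimpleGraph V) (m : ℕ) where
  parts : Fin m → Finset V
  disj : ∀ i j, i ≠ j → Disjoint (parts i) (parts j)
  cover : ∀ v, ∃ i, v ∈ parts i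
  clique : ∀ i, G.IsClique ↑(parts i)

/-!
Every clique is dominated by any one of its vertices. Hence `D`, together with one vertex from
each clique that is neither chosen nor meets `D`, dominates `G`. If `J` is the set of cliques
meeting `D`, this gives `k = γ(G) ≤ |D| + (k + n - l - |J|)`, while the sum in question
is `|D| - |J|`.
-/

namespace CliquePartition

variable {V : Type*} {G : SimpleGraph V} {m : ℕ} (P : CliquePartition G m)

noncomputable def index (v : V) : Fin m := (P.cover v).choose

theorem mem_parts_index (v : V) : v ∈ P.parts (P.index v) := (P.cover v).choose_spec

theorem index_eq_of_mem {v : V} {j : Fin m} (hv : v ∈ P.parts j) : P.index v = j := by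
  by_contra hne
  exact Finset.disjoint_left.mp (P.disj _ _ hne) (P.mem_parts_index v) hv

theorem mem_parts_iff_index_eq {v : V} {j : Fin m} : v ∈ P.parts j ↔ P.index v = j :=
  ⟨P.index_eq_of_mem, fun h => h ▸ P.mem_parts_index v⟩

theorem eq_or_adj_of_index_eq {u v : V} (h : P.index u = P.index v) : u = v ∨ G.Adj u v := by
  by_cases huv : u = v
  · exact Or.inl huv
  · exact Or.inr (P.clique _ (P.mem_parts_index u) (h ▸ P.mem_parts_index v) huv)

theorem dominates_of_index_mem_image [DecidableEq V] (D : Finset V) :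
    Dominates G ↑D {v | P.index v ∈ D.image P.index} := by
  intro v hv
  obtain ⟨d, hd, hdv⟩ := Finset.mem_image.mp hv
  exact ⟨d, hd, P.eq_or_adj_of_index_eq hdv⟩

/-- One vertex from each clique outside `A` dominates all vertices outside the cliques of `A`. -/
theorem exists_dominates_index_notMem (A : Finset (Fin m)) :
    ∃ R : Finset V, R.card + A.card ≤ m ∧ Dominates G ↑R {v | P.index v ∉ A} := by
  classical
  set t := Aᶜ.filter fun j => ∃ v, P.index v = j
  obtain ⟨R, -, hinj, hRt⟩ := Finset.exists_subset_injOn_image_eq_of_surjOn Set.univ t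
    (fun j hj => by
      obtain ⟨v, hv⟩ := (Finset.mem_filter.mp hj).2
      exact ⟨v, Set.mem_univ v, hv⟩)
  refine ⟨R, ?_, fun v hv => ?_⟩
  · have := Finset.card_le_card (show t ⊆ Aᶜ from Finset.filter_subset _ _)
    rw [Finset.card_compl, Fintype.card_fin, ← hRt, Finset.card_image_of_injOn hinj] at this
    have := A.card_le_univ
    simp only [Fintype.card_fin] at this
    omega
  · have hvt : P.index v ∈ t := Finset.mem_filter.mpr ⟨Finset.mem_compl.mpr hv, v, rfl⟩
    rw [← hRt] at hvt
    obtain ⟨r, hr, hrv⟩ := Finset.mem_image.mp hvt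
    exact ⟨r, hr, P.eq_or_adj_of_index_eq hrv⟩

theorem filter_inter_nonempty_eq_image [DecidableEq V] (D : Finset V) :
    (Finset.univ.filter fun j => (P.parts j ∩ D).Nonempty) = D.image P.index := by
  ext j
  rw [Finset.mem_filter, Finset.mem_image]
  simp only [Finset.mem_univ, true_and, Finset.Nonempty, Finset.mem_inter, P.mem_parts_iff_index_eq]
  exact ⟨fun ⟨v, hj, hv⟩ => ⟨v, hv, hj⟩, fun ⟨v, hv, hj⟩ => ⟨v, hj, hv⟩⟩

theorem sum_card_inter_sub_one [DecidableEq V] (D : Finset V) :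
    ∑ j ∈ D.image P.index, ((P.parts j ∩ D).card - 1 : ℤ) =
      D.card - (D.image P.index).card := by
  have hfiber : ∀ j, P.parts j ∩ D = D.filter fun v => P.index v = j := by
    intro j
    ext v
    simp only [Finset.mem_inter, Finset.mem_filter, P.mem_parts_iff_index_eq, and_comm]
  rw [Finset.sum_sub_distrib, Finset.card_eq_sum_card_image P.index D]
  simp [hfiber]

end CliquePartition

theorem domNum_le_card {V : Type*} [Fintype V] {G : SimpleGraph V} {D : Finset V}
    (hD : Dominates G ↑D Set.univ) : domNum G ≤ D.card :=
  Nat.sInf_le ⟨D, rfl, hD⟩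

theorem stmt0_general {V : Type*} [Fintype V] [DecidableEq V] (G : SimpleGraph V) (k n : ℕ)
    (hk : domNum G = k) (P : CliquePartition G (k + n))
    (l : ℕ) (I : Fin l → Fin (k + n)) (hI : Function.Injective I)
    (D : Finset V)
    (hDdisj : ∀ a : Fin l, Disjoint D (P.parts (I a)))
    (hDdom : Dominates G ↑D ↑((Finset.univ : Finset (Fin l)).biUnion fun a => P.parts (I a))) :
    (∑ j ∈ (Finset.univ.filter fun j : Fin (k + n) => (P.parts j ∩ D).Nonempty),
        ((P.parts j ∩ D).card - 1 : ℤ)) ≥ (l : ℤ) - n := by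
  rw [P.filter_inter_nonempty_eq_image, P.sum_card_inter_sub_one]
  set J := D.image P.index
  have hIJ : Disjoint (Finset.univ.image I) J := by
    refine Finset.disjoint_left.mpr fun j hjI hjJ => ?_
    obtain ⟨a, -, rfl⟩ := Finset.mem_image.mp hjI
    obtain ⟨d, hd, hda⟩ := Finset.mem_image.mp hjJ
    exact Finset.disjoint_left.mp (hDdisj a) hd (P.mem_parts_iff_index_eq.mpr hda)
  obtain ⟨R, hR, hRdom⟩ := P.exists_dominates_index_notMem (Finset.univ.image I ∪ J)
  rw [Finset.card_union_of_disjoint hIJ, Finset.card_image_of_injective _ hI,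
    Finset.card_univ, Fintype.card_fin] at hR
  have hdom : Dominates G ↑(D ∪ R) Set.univ := by
    intro v _
    by_cases hvI : P.index v ∈ Finset.univ.image I
    · obtain ⟨a, -, ha⟩ := Finset.mem_image.mp hvI
      have hv : v ∈ (Finset.univ : Finset (Fin l)).biUnion fun a => P.parts (I a) :=
        Finset.mem_biUnion.mpr ⟨a, Finset.mem_univ a, P.mem_parts_iff_index_eq.mpr ha.symm⟩
      obtain ⟨s, hs, hsv⟩ := hDdom v hv
      exact ⟨s, Finset.mem_union_left R hs, hsv⟩
    by_cases hvJ : P.index v ∈ J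
    · obtain ⟨s, hs, hsv⟩ := P.dominates_of_index_mem_image D v hvJ
      exact ⟨s, Finset.mem_union_left R hs, hsv⟩
    · obtain ⟨s, hs, hsv⟩ := hRdom v (Finset.notMem_union.mpr ⟨hvI, hvJ⟩)
      exact ⟨s, Finset.mem_union_right D hs, hsv⟩
  have hkD := (domNum_le_card hdom).trans (Finset.card_union_le D R)
  omega

/-- Lemma 1 (Bartsalkin–German pigeonhole lemma, generalized):
if `D` is a smallest set disjoint from the chosen cliques `C_{i₁},…,C_{i_l}`
dominating their union, and `J` is the set of cliques meeting `D`, then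
`∑_{j ∈ J} (|C_j ∩ D| - 1) ≥ l - n`. -/
theorem stmt0 {V : Type*} [Fintype V] [DecidableEq V] (G : SimpleGraph V) (k n : ℕ)
    (hk : domNum G = k) (P : CliquePartition G (k + n))
    (l : ℕ) (hl : l < k + n) (I : Fin l → Fin (k + n)) (hI : Function.Injective I)
    (D : Finset V)
    (hDdisj : ∀ a : Fin l, Disjoint D (P.parts (I a)))
    (hDdom : Dominates G ↑D ↑((Finset.univ : Finset (Fin l)).biUnion fun a => P.parts (I a)))
    (hDmin : ∀ D' : Finset V,
      (∀ a : Fin l, Disjoint D' (P.parts (I a))) →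
      Dominates G ↑D' ↑((Finset.univ : Finset (Fin l)).biUnion fun a => P.parts (I a)) →
      D.card ≤ D'.card) :
    (∑ j ∈ (Finset.univ.filter fun j : Fin (k + n) => (P.parts j ∩ D).Nonempty),
        ((P.parts j ∩ D).card - 1 : ℤ)) ≥ (l : ℤ) - n :=
  stmt0_general G k n hk P l I hI D hDdisj hDdom
end

section
/- If γ(G) − r > 0 and both γ(G □ H) ≥ (γ(G) − r)γ(H) and (r+1)/r · γ(G □ H) ≥ (γ(G)+1)γ(H) hold for the particular value r equal to the minimum restraint parameter, then γ(G □ H) ≥ min over 1 ≤ r ≤ γ(G) of max{(γ(G) − r)γ(H), (r/(r+1))(γ(G)+1)γ(H)} ≥ (γ(G) − √γ(G))γ(H). -/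
open Finset

/-!
Write `s = √γ(G)`. If `r ≤ s`, the undercount term `(γ(G) − r)γ(H)` is already at least
`(γ(G) − s)γ(H)`. If `r > s`, then `r(1 + s) > s + s² = s + γ(G) ≥ γ(G) − s`, which rearranges to
`(r/(r+1))(γ(G) + 1) ≥ γ(G) − s`, so the overcount term is large enough.
-/

theorem sub_sqrt_le_max {g : ℝ} (hg : 0 ≤ g) (r : ℝ) :
    g - √g ≤ max (g - r) (r / (r + 1) * (g + 1)) := by
  have hs : √g * √g = g := Real.mul_self_sqrt hg
  rcases le_or_gt r √g with hr | hr
  · exact le_max_of_le_left (by linarith)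
  · have hr1 : 0 < r + 1 := by linarith [Real.sqrt_nonneg g]
    refine le_max_of_le_right ?_
    rw [div_mul_eq_mul_div, le_div_iff₀ hr1]
    nlinarith [Real.sqrt_nonneg g]

theorem div_succ_mul_le_of_le_succ_div_mul {r a b : ℝ} (hr : 0 < r) (h : b ≤ (r + 1) / r * a) :
    r / (r + 1) * b ≤ a := by
  have := (inv_mul_le_iff₀ (by positivity : 0 < (r + 1) / r)).2 h
  rwa [inv_div] at this

theorem stmt18_general {V W : Type*} [Fintype V] [Fintype W]
    (G : SimpleGraph V) (H : SimpleGraph W) (r : ℕ)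
    (hr1 : 1 ≤ r)
    (h1 : (domNum (G.boxProd H) : ℝ) ≥ ((domNum G : ℝ) - r) * domNum H)
    (h2 : ((r + 1 : ℝ) / r) * domNum (G.boxProd H) ≥ ((domNum G : ℝ) + 1) * domNum H) :
    (∀ r' : ℕ, 1 ≤ r' → r' ≤ domNum G →
        max (((domNum G : ℝ) - r') * domNum H)
          ((r' : ℝ) / (r' + 1) * ((domNum G : ℝ) + 1) * domNum H) ≥
        ((domNum G : ℝ) - Real.sqrt (domNum G)) * domNum H) ∧
    (domNum (G.boxProd H) : ℝ) ≥
      ((domNum G : ℝ) - Real.sqrt (domNum G)) * domNum H := by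
  have hmax (r' : ℕ) : max (((domNum G : ℝ) - r') * domNum H)
      ((r' : ℝ) / (r' + 1) * ((domNum G : ℝ) + 1) * domNum H) ≥
        ((domNum G : ℝ) - Real.sqrt (domNum G)) * domNum H := by
    rw [ge_iff_le, ← max_mul_of_nonneg _ _ (Nat.cast_nonneg _)]
    exact mul_le_mul_of_nonneg_right (sub_sqrt_le_max (Nat.cast_nonneg _) r') (Nat.cast_nonneg _)
  have hovercount : (r : ℝ) / (r + 1) * ((domNum G : ℝ) + 1) * domNum H ≤ domNum (G.boxProd H) := by
    rw [mul_assoc]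
    exact div_succ_mul_le_of_le_succ_div_mul (by exact_mod_cast hr1) h2
  exact ⟨fun r' _ _ => hmax r', (hmax r).trans (max_le h1 hovercount)⟩

/-- Combining the undercount bound `γ(G □ H) ≥ (γ(G) − r)γ(H)` and the overcount bound
`((r+1)/r)·γ(G □ H) ≥ (γ(G)+1)γ(H)` for the minimum restraint parameter `r` gives
`γ(G □ H) ≥ min_{1 ≤ r ≤ γ(G)} max{(γ(G) − r)γ(H), (r/(r+1))(γ(G)+1)γ(H)}
  ≥ (γ(G) − √γ(G))·γ(H)`. -/
theorem stmt18 {V W : Type*} [Fintype V] [Fintype W]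
    (G : SimpleGraph V) (H : SimpleGraph W) (r : ℕ)
    (hr1 : 1 ≤ r) (hr2 : r ≤ domNum G) (hpos : (0 : ℝ) < (domNum G : ℝ) - r)
    (h1 : (domNum (G.boxProd H) : ℝ) ≥ ((domNum G : ℝ) - r) * domNum H)
    (h2 : ((r + 1 : ℝ) / r) * domNum (G.boxProd H) ≥ ((domNum G : ℝ) + 1) * domNum H) :
    (∀ r' : ℕ, 1 ≤ r' → r' ≤ domNum G →
        max (((domNum G : ℝ) - r') * domNum H)
          ((r' : ℝ) / (r' + 1) * ((domNum G : ℝ) + 1) * domNum H) ≥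
        ((domNum G : ℝ) - Real.sqrt (domNum G)) * domNum H) ∧
    (domNum (G.boxProd H) : ℝ) ≥
      ((domNum G : ℝ) - Real.sqrt (domNum G)) * domNum H :=
  stmt18_general G H r hr1 h1 h2
end
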